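/- Every discrete Morse function on a tree is cm-equivalent to a discrete Morse function on a path. -/

import Mathlib

/-- The data of a function on the simplices (vertices and edges) of a graph. -/
structure PreDMF (V : Type*) where
  f₀ : V → ℝ
  f₁ : Sym2 V → ℝ

/-- A discrete Morse function on a graph: weakly increasing on faces, at most 2-to-1,
and equal values only occur on vertex/incident-edge pairs. -/
def IsDMF {V : Type*} (G : SimpleGraph V) (F : PreDMF V) : Prop :=
  (∀ e ∈ G.edgeSet, ∀ v ∈ e, F.f₀ v ≤ F.f₁ e) ∧
  (∀ u v : V, F.f₀ u = F.f₀ v → u = v) ∧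
  (∀ e ∈ G.edgeSet, ∀ e' ∈ G.edgeSet, F.f₁ e = F.f₁ e' → e = e') ∧
  (∀ v : V, ∀ e ∈ G.edgeSet, F.f₀ v = F.f₁ e → v ∈ e)

/-- A critical 0-simplex (vertex): no edge shares its value. -/
def CritV {V : Type*} (G : SimpleGraph V) (F : PreDMF V) (v : V) : Prop :=
  ∀ e ∈ G.edgeSet, F.f₁ e ≠ F.f₀ v

/-- A critical 1-simplex (edge): no vertex shares its value. -/
def CritE {V : Type*} (G : SimpleGraph V) (F : PreDMF V) (e : Sym2 V) : Prop :=
  e ∈ G.edgeSet ∧ ∀ v : V, F.f₀ v ≠ F.f₁ e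

/-- The sublevel complex of level `c` (edges of value `≤ c`). -/
def lsub {V : Type*} (G : SimpleGraph V) (F : PreDMF V) (c : ℝ) : SimpleGraph V where
  Adj u w := G.Adj u w ∧ F.f₁ s(u, w) ≤ c
  symm := by
    constructor
    intro u w h
    exact ⟨h.1.symm, by rw [Sym2.eq_swap]; exact h.2⟩
  loopless := by
    constructor
    intro u h
    exact G.ne_of_adj h.1 rfl

/-- The strict sublevel complex `X_{c-ε}` (edges of value `< c`). -/
def ssub {V : Type*} (G : SimpleGraph V) (F : PreDMF V) (c : ℝ) : SimpleGraph V where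
  Adj u w := G.Adj u w ∧ F.f₁ s(u, w) < c
  symm := by
    constructor
    intro u w h
    exact ⟨h.1.symm, by rw [Sym2.eq_swap]; exact h.2⟩
  loopless := by
    constructor
    intro u h
    exact G.ne_of_adj h.1 rfl

/-- Component-merge (cm) equivalence between dMfs on trees: a value-preserving
bijection of simplices (vertices to vertices, edges to edges) that induces a bijection
between the connected components of every sublevel complex, and such that an edge of
critical value `a` merges two given components of the strict sublevel complex
`X_{a-ε}` if and only if its image merges the corresponding components. -/
def CmEquiv {V V' : Type*} (G : SimpleGraph V) (F : PreDMF V)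
    (G' : SimpleGraph V') (F' : PreDMF V')
    (φv : V → V') (φe : Sym2 V → Sym2 V') : Prop :=
  Function.Bijective φv ∧
  (∀ e ∈ G.edgeSet, φe e ∈ G'.edgeSet) ∧
  (∀ e₁ ∈ G.edgeSet, ∀ e₂ ∈ G.edgeSet, φe e₁ = φe e₂ → e₁ = e₂) ∧
  (∀ e' ∈ G'.edgeSet, ∃ e ∈ G.edgeSet, φe e = e') ∧
  (∀ v : V, F'.f₀ (φv v) = F.f₀ v) ∧
  (∀ e ∈ G.edgeSet, F'.f₁ (φe e) = F.f₁ e) ∧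
  (∀ (c : ℝ) (u w : V),
    (lsub G F c).Reachable u w ↔ (lsub G' F' c).Reachable (φv u) (φv w)) ∧
  (∀ e ∈ G.edgeSet, ∀ u ∈ e, ∃ u' ∈ φe e, (ssub G' F' (F.f₁ e)).Reachable (φv u) u') ∧
  (∀ e ∈ G.edgeSet, ∀ u' ∈ φe e, ∃ u ∈ e, (ssub G' F' (F.f₁ e)).Reachable u' (φv u))

/-!
Removing the edge `uw` of largest value `m` splits the tree into the subtrees through `u` and `w`;
by induction each is modelled by a path carrying the same edge values and the same sublevel
connectivity. Joining the two paths by an edge of value `m` models the whole tree: below `m` both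
sublevel complexes are disjoint unions of those of the two pieces, and from `m` on both are
connected.

Such a path, with distinct edge values, automatically carries a discrete Morse function, and
matching edges by value is a cm equivalence: the edge of value `a` is the only edge entering at
level `a`, so in both complexes it merges the same two components of the strict sublevel complex.
-/

namespace SimpleGraph

variable {V : Type*}

lemma reachable_edge (a b : V) : (edge a b).Reachable a b := by
  rcases eq_or_ne a b with rfl | hab
  · rfl
  · exact Adj.reachable ((edge_adj ..).mpr ⟨Or.inl ⟨rfl, rfl⟩, hab⟩)

lemma Reachable.of_le_sup_edge {K K' : SimpleGraph V} {s t x y : V} (hle : K' ≤ K ⊔ edge s t)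
    (h : K'.Reachable x y) :
    K.Reachable x y ∨ (K.Reachable x s ∧ K.Reachable t y) ∨
      (K.Reachable x t ∧ K.Reachable s y) := by
  obtain ⟨p⟩ := h
  induction p with
  | nil => exact Or.inl .rfl
  | cons hadj _ ih =>
    rcases hle hadj with hK | he
    · have hr := hK.reachable
      rcases ih with h | ⟨h₁, h₂⟩ | ⟨h₁, h₂⟩
      · exact Or.inl (hr.trans h)
      · exact Or.inr (Or.inl ⟨hr.trans h₁, h₂⟩)
      · exact Or.inr (Or.inr ⟨hr.trans h₁, h₂⟩)
    · rw [edge_adj] at he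
      rcases he.1 with ⟨rfl, rfl⟩ | ⟨rfl, rfl⟩
      · rcases ih with h | ⟨h₁, h₂⟩ | ⟨-, h₂⟩
        · exact Or.inr (Or.inl ⟨.rfl, h⟩)
        · exact Or.inl (h₁.symm.trans h₂)
        · exact Or.inl h₂
      · rcases ih with h | ⟨-, h₂⟩ | ⟨h₁, h₂⟩
        · exact Or.inr (Or.inr ⟨.rfl, h⟩)
        · exact Or.inl h₂
        · exact Or.inl (h₁.symm.trans h₂)

lemma reachable_sup_iff_of_support_subset {K₁ K₂ : SimpleGraph V} {A B : Set V}
    (hAB : Disjoint A B) (h₁ : K₁.support ⊆ A) (h₂ : K₂.support ⊆ B) {x y : V} :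
    (K₁ ⊔ K₂).Reachable x y ↔ K₁.Reachable x y ∨ K₂.Reachable x y := by
  have step : ∀ {K K' : SimpleGraph V} {A B : Set V}, Disjoint A B → K.support ⊆ A →
      K'.support ⊆ B → ∀ {x z y : V}, K.Adj x z → K'.Reachable z y → K.Reachable x y := by
    intro K K' A B hAB hA hB x z y hxz hzy
    rcases eq_or_ne z y with rfl | hne
    · exact hxz.reachable
    · exact (hAB.ne_of_mem (hA hxz.symm.left_mem_support)
        (hB (mem_support_of_reachable hne hzy)) rfl).elim
  refine ⟨fun h => ?_, fun h => h.elim (·.mono le_sup_left) (·.mono le_sup_right)⟩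
  obtain ⟨p⟩ := h
  induction p with
  | nil => exact Or.inl .rfl
  | cons hadj _ ih =>
    rcases hadj with hadj | hadj <;> rcases ih with h | h
    · exact Or.inl (hadj.reachable.trans h)
    · exact Or.inl (step hAB h₁ h₂ hadj h)
    · exact Or.inr (step hAB.symm h₂ h₁ hadj h)
    · exact Or.inr (hadj.reachable.trans h)

lemma reachable_iff_of_support_subset {G : SimpleGraph V} {S : Set V} (hsupp : G.support ⊆ S)
    (hS : ∀ x ∈ S, ∀ y ∈ S, G.Reachable x y) {x y : V} :
    G.Reachable x y ↔ x = y ∨ x ∈ S ∧ y ∈ S := by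
  refine ⟨fun h => ?_, fun h => h.elim (· ▸ .rfl) fun h => hS x h.1 y h.2⟩
  rcases eq_or_ne x y with hxy | hxy
  · exact Or.inl hxy
  · exact Or.inr ⟨hsupp (mem_support_of_reachable hxy h),
      hsupp (mem_support_of_reachable hxy.symm h.symm)⟩

namespace ConnectedComponent

variable {K : SimpleGraph V} (C : K.ConnectedComponent)

lemma spanningCoe_toSimpleGraph_le : C.toSimpleGraph.spanningCoe ≤ K :=
  spanningCoe_induce_le K C.supp

lemma support_spanningCoe_toSimpleGraph_subset : C.toSimpleGraph.spanningCoe.support ⊆ C.supp :=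
  fun _ ⟨_, h⟩ => ((adj_spanningCoe_toSimpleGraph C).mp h).1

lemma reachable_spanningCoe_toSimpleGraph {u v : V} (hu : u ∈ C.supp) (hv : v ∈ C.supp) :
    C.toSimpleGraph.spanningCoe.Reachable u v :=
  (C.reachable_toSimpleGraph hu hv).map (Embedding.map (Function.Embedding.subtype _) _).toHom

end ConnectedComponent

lemma deleteEdges_sup_edge {G : SimpleGraph V} {u w : V} (h : G.Adj u w) :
    G.deleteEdges {s(u, w)} ⊔ edge u w = G := by
  ext x y
  simp only [sup_adj, deleteEdges_adj, Set.mem_singleton_iff, edge_adj]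
  constructor
  · rintro (⟨hxy, -⟩ | ⟨hxy, -⟩)
    · exact hxy
    · rcases hxy with ⟨rfl, rfl⟩ | ⟨rfl, rfl⟩
      exacts [h, h.symm]
  · intro hxy
    by_cases he : s(x, y) = s(u, w)
    · exact Or.inr ⟨Sym2.eq_iff.mp he, hxy.ne⟩
    · exact Or.inl ⟨hxy, he⟩

lemma ncard_neighborSet_edge_le (a b v : V) : ((edge a b).neighborSet v).ncard ≤ 1 := by
  classical
  refine (Set.ncard_le_ncard (t := {if v = a then b else a}) ?_).trans (Set.ncard_singleton _).le
  intro w hw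
  rw [mem_neighborSet, edge_adj] at hw
  grind

lemma neighborSet_edge_eq_empty {a b v : V} (ha : v ≠ a) (hb : v ≠ b) :
    (edge a b).neighborSet v = ∅ := by
  ext w
  simp [edge_adj, ha, hb]

lemma neighborSet_eq_empty_of_notMem_support {G : SimpleGraph V} {v : V} (h : v ∉ G.support) :
    G.neighborSet v = ∅ :=
  Set.eq_empty_of_forall_notMem fun w hw => h ⟨w, hw⟩

def pathGraphOn : List V → SimpleGraph V
  | a :: b :: l => pathGraphOn (b :: l) ⊔ edge a b
  | _ => ⊥

@[simp] lemma pathGraphOn_nil : pathGraphOn ([] : List V) = ⊥ := rfl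

@[simp] lemma pathGraphOn_singleton (a : V) : pathGraphOn [a] = ⊥ := rfl

lemma pathGraphOn_cons_cons (a b : V) (l : List V) :
    pathGraphOn (a :: b :: l) = pathGraphOn (b :: l) ⊔ edge a b := rfl

lemma mem_of_mem_support_pathGraphOn {v : V} :
    ∀ {L : List V}, v ∈ (pathGraphOn L).support → v ∈ L
  | [], h | [_], h => by simp at h
  | a :: b :: l, ⟨w, h⟩ => by
    rcases h with h | h
    · exact List.mem_cons_of_mem a (mem_of_mem_support_pathGraphOn ⟨w, h⟩)
    · rw [edge_adj] at h
      rcases h.1 with ⟨rfl, -⟩ | ⟨rfl, -⟩ <;> simp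

lemma reachable_pathGraphOn {x y : V} :
    ∀ {L : List V}, x ∈ L → y ∈ L → (pathGraphOn L).Reachable x y
  | [a], hx, hy => by simp_all
  | a :: b :: l, hx, hy => by
    have hb : ∀ z ∈ a :: b :: l, (pathGraphOn (a :: b :: l)).Reachable z b := by
      intro z hz
      rcases List.mem_cons.mp hz with rfl | hz
      · exact (reachable_edge z b).mono le_sup_right
      · exact (reachable_pathGraphOn hz List.mem_cons_self).mono le_sup_left
    exact (hb x hx).trans (hb y hy).symm

lemma pathGraphOn_append : ∀ {L₁ L₂ : List V} (h₁ : L₁ ≠ []) (h₂ : L₂ ≠ []),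
    pathGraphOn (L₁ ++ L₂) =
      pathGraphOn L₁ ⊔ pathGraphOn L₂ ⊔ edge (L₁.getLast h₁) (L₂.head h₂)
  | [a], b :: l, _, _ => by simp [pathGraphOn_cons_cons]
  | a :: c :: l, L₂, _, h₂ => by
    rw [List.cons_append, List.cons_append, pathGraphOn_cons_cons, ← List.cons_append,
      pathGraphOn_append (List.cons_ne_nil c l) h₂, List.getLast_cons_cons,
      pathGraphOn_cons_cons]
    ac_rfl

lemma isAcyclic_pathGraphOn : ∀ {L : List V}, L.Nodup → (pathGraphOn L).IsAcyclic
  | [], _ | [_], _ => isAcyclic_bot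
  | a :: b :: l, h => by
    rw [List.nodup_cons] at h
    refine (isAcyclic_pathGraphOn h.2).sup_edge_of_not_reachable fun hab => h.1 ?_
    have hne : a ≠ b := fun hab => h.1 (hab ▸ List.mem_cons_self)
    exact mem_of_mem_support_pathGraphOn (mem_support_of_reachable hne hab)

lemma ncard_neighborSet_pathGraphOn_head_le {a : V} {l : List V} (h : (a :: l).Nodup) :
    ((pathGraphOn (a :: l)).neighborSet a).ncard ≤ 1 := by
  match l, h with
  | [], _ => simp
  | b :: l, h =>
    rw [pathGraphOn_cons_cons, neighborSet_sup,
      neighborSet_eq_empty_of_notMem_support fun ha =>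
        (List.nodup_cons.mp h).1 (mem_of_mem_support_pathGraphOn ha), Set.empty_union]
    exact ncard_neighborSet_edge_le a b a

lemma ncard_neighborSet_pathGraphOn_le :
    ∀ {L : List V}, L.Nodup → ∀ v, ((pathGraphOn L).neighborSet v).ncard ≤ 2
  | [], _, v | [_], _, v => by simp
  | a :: b :: l, h, v => by
    rw [pathGraphOn_cons_cons, neighborSet_sup]
    refine (Set.ncard_union_le _ _).trans ?_
    have hE := ncard_neighborSet_edge_le a b v
    have hnd := (List.nodup_cons.mp h).2
    by_cases hvb : v = b
    · subst hvb
      have := ncard_neighborSet_pathGraphOn_head_le hnd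
      omega
    by_cases hva : v = a
    · subst hva
      rw [neighborSet_eq_empty_of_notMem_support fun hv =>
        (List.nodup_cons.mp h).1 (mem_of_mem_support_pathGraphOn hv)]
      simp only [Set.ncard_empty]
      omega
    · rw [neighborSet_edge_eq_empty hva hvb, Set.ncard_empty]
      exact ncard_neighborSet_pathGraphOn_le hnd v

lemma isTree_pathGraphOn {L : List V} (hL : L.Nodup) (hne : L ≠ []) (hcov : ∀ v, v ∈ L) :
    (pathGraphOn L).IsTree :=
  have : Nonempty V := ⟨L.head hne⟩
  ⟨⟨fun x y => reachable_pathGraphOn (hcov x) (hcov y)⟩, isAcyclic_pathGraphOn hL⟩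

structure IsEdgeJoin (K K₁ K₂ : SimpleGraph V) (A B : Set V) (p q : V) : Prop where
  eq_sup : K = K₁ ⊔ K₂ ⊔ edge p q
  disjoint : Disjoint A B
  support_left : K₁.support ⊆ A
  support_right : K₂.support ⊆ B
  left_mem : p ∈ A
  right_mem : q ∈ B

namespace IsEdgeJoin

variable {K K₁ K₂ : SimpleGraph V} {A B : Set V} {p q : V}

lemma ne (hK : IsEdgeJoin K K₁ K₂ A B p q) : p ≠ q :=
  hK.disjoint.ne_of_mem hK.left_mem hK.right_mem

lemma edgeSet_eq (hK : IsEdgeJoin K K₁ K₂ A B p q) :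
    K.edgeSet = insert s(p, q) (K₁.edgeSet ∪ K₂.edgeSet) := by
  rw [hK.eq_sup, edgeSet_sup, edgeSet_sup, edgeSet_edge_of_ne hK.ne, Set.union_singleton]

lemma disjoint_edgeSet (hK : IsEdgeJoin K K₁ K₂ A B p q) : Disjoint K₁.edgeSet K₂.edgeSet := by
  refine Set.disjoint_left.mpr fun e he₁ he₂ => ?_
  induction e using Sym2.ind with | _ x y =>
  exact hK.disjoint.ne_of_mem (hK.support_left (Adj.left_mem_support _ he₁))
    (hK.support_right (Adj.left_mem_support _ he₂)) rfl

lemma edge_notMem (hK : IsEdgeJoin K K₁ K₂ A B p q) :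
    s(p, q) ∉ K₁.edgeSet ∪ K₂.edgeSet := by
  rintro (h | h)
  · exact hK.disjoint.ne_of_mem (hK.support_left (Adj.right_mem_support _ h)) hK.right_mem rfl
  · exact hK.disjoint.ne_of_mem hK.left_mem (hK.support_right (Adj.left_mem_support _ h)) rfl

lemma support_subset (hK : IsEdgeJoin K K₁ K₂ A B p q) : K.support ⊆ A ∪ B := by
  rintro v ⟨w, h⟩
  rw [hK.eq_sup] at h
  rcases h with (h | h) | h
  · exact Or.inl (hK.support_left ⟨w, h⟩)
  · exact Or.inr (hK.support_right ⟨w, h⟩)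
  · rw [edge_adj] at h
    rcases h.1 with ⟨rfl, -⟩ | ⟨rfl, -⟩
    exacts [Or.inl hK.left_mem, Or.inr hK.right_mem]

lemma image_edgeSet (hK : IsEdgeJoin K K₁ K₂ A B p q) {β : Type*} (f : Sym2 V → β) :
    f '' K.edgeSet = insert (f s(p, q)) (f '' K₁.edgeSet ∪ f '' K₂.edgeSet) := by
  rw [hK.edgeSet_eq, Set.image_insert_eq, Set.image_union]

lemma injOn_edgeSet_iff (hK : IsEdgeJoin K K₁ K₂ A B p q) {β : Type*} {f : Sym2 V → β} :
    Set.InjOn f K.edgeSet ↔ Set.InjOn f K₁.edgeSet ∧ Set.InjOn f K₂.edgeSet ∧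
      Disjoint (f '' K₁.edgeSet) (f '' K₂.edgeSet) ∧
      f s(p, q) ∉ f '' K₁.edgeSet ∪ f '' K₂.edgeSet := by
  rw [hK.edgeSet_eq, Set.injOn_insert hK.edge_notMem, Set.injOn_union hK.disjoint_edgeSet,
    Set.image_union, and_assoc, and_assoc]
  refine and_congr_right fun _ => and_congr_right fun _ => and_congr_left fun _ =>
    ⟨Set.disjoint_image_image, fun h x hx y hy =>
      h.ne_of_mem (Set.mem_image_of_mem f hx) (Set.mem_image_of_mem f hy)⟩

end IsEdgeJoin

lemma isEdgeJoin_of_not_reachable {G H : SimpleGraph V} {S : Set V} {u w : V}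
    (hH : G = H ⊔ edge u w) (hnr : ¬ H.Reachable u w) (hsupp : G.support ⊆ S)
    (hS : ∀ x ∈ S, ∀ y ∈ S, G.Reachable x y) :
    IsEdgeJoin G (H.connectedComponentMk u).toSimpleGraph.spanningCoe
      (H.connectedComponentMk w).toSimpleGraph.spanningCoe (H.connectedComponentMk u).supp
      (H.connectedComponentMk w).supp u w ∧
    S = (H.connectedComponentMk u).supp ∪ (H.connectedComponentMk w).supp := by
  have hHG : H ≤ G := hH ▸ le_sup_left
  have huw : G.Adj u w := by
    rw [hH]
    exact Or.inr ((edge_adj ..).mpr ⟨Or.inl ⟨rfl, rfl⟩, fun h => hnr (h ▸ .rfl)⟩)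
  have hcov : ∀ x ∈ S, H.Reachable x u ∨ H.Reachable x w := fun x hx => by
    rcases (hS x hx u (hsupp (Adj.left_mem_support _ huw))).of_le_sup_edge hH.le with
      h | ⟨h, -⟩ | ⟨h, -⟩
    exacts [Or.inl h, Or.inl h, Or.inr h]
  have hcomp : ∀ {x y}, x ∈ (H.connectedComponentMk y).supp ↔ H.Reachable x y := fun {x y} =>
    (ConnectedComponent.mem_supp_iff _ x).trans ConnectedComponent.eq
  refine ⟨⟨?_, ?_, ConnectedComponent.support_spanningCoe_toSimpleGraph_subset _,
    ConnectedComponent.support_spanningCoe_toSimpleGraph_subset _, hcomp.mpr .rfl, hcomp.mpr .rfl⟩,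
    ?_⟩
  · conv_lhs => rw [hH]
    congr 1
    ext x y
    simp only [sup_adj, ConnectedComponent.adj_spanningCoe_toSimpleGraph, hcomp, ← or_and_right]
    refine ⟨fun h => ⟨hcov x (hsupp (Adj.left_mem_support _ (hHG h))), h⟩, fun h => h.2⟩
  · exact pairwise_disjoint_supp_connectedComponent H fun h => hnr (ConnectedComponent.eq.mp h)
  · have hmem : ∀ {x y}, y ∈ S → H.Reachable x y → x ∈ S := fun {x y} hy h => by
      rcases eq_or_ne x y with rfl | hne
      · exact hy
      · exact hsupp (support_mono hHG (mem_support_of_reachable hne h))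
    ext x
    refine ⟨fun hx => (hcov x hx).imp hcomp.mpr hcomp.mpr, ?_⟩
    rintro (h | h)
    · exact hmem (hsupp (Adj.left_mem_support _ huw)) (hcomp.mp h)
    · exact hmem (hsupp (Adj.right_mem_support _ huw)) (hcomp.mp h)

end SimpleGraph

open SimpleGraph

section Sublevel

variable {V : Type*} {G G₁ G₂ : SimpleGraph V} {F F' : PreDMF V} {c : ℝ}

lemma lsub_le : lsub G F c ≤ G := fun _ _ h => h.1

lemma lsub_mono {c' : ℝ} (h : c ≤ c') : lsub G F c ≤ lsub G F c' :=
  fun _ _ hxy => ⟨hxy.1, hxy.2.trans h⟩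

lemma lsub_sup : lsub (G₁ ⊔ G₂) F c = lsub G₁ F c ⊔ lsub G₂ F c := by
  ext x y
  exact or_and_right

lemma lsub_edge_of_lt {a b : V} (h : c < F.f₁ s(a, b)) : lsub (edge a b) F c = ⊥ := by
  ext x y
  refine iff_of_false (fun hxy => ?_) id
  obtain ⟨hab, hle⟩ := hxy
  rw [adj_edge] at hab
  rw [← hab.1] at hle
  linarith

lemma lsub_eq_self (h : ∀ e ∈ G.edgeSet, F.f₁ e ≤ c) : lsub G F c = G := by
  ext x y
  exact ⟨fun hxy => hxy.1, fun hxy => ⟨hxy, h _ hxy⟩⟩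

lemma lsub_congr (h : ∀ e ∈ G.edgeSet, F.f₁ e = F'.f₁ e) : lsub G F c = lsub G F' c := by
  ext x y
  exact and_congr_right fun hxy => by rw [h _ hxy]

lemma ssub_reachable_iff {x y : V} :
    (ssub G F c).Reachable x y ↔ ∃ c' < c, (lsub G F c').Reachable x y := by
  refine ⟨fun h => ?_, fun ⟨c', hc', h⟩ =>
    h.mono fun _ _ (hxy : (lsub G F c').Adj _ _) => ⟨hxy.1, hxy.2.trans_lt hc'⟩⟩
  obtain ⟨p⟩ := h
  induction p with
  | nil => exact ⟨c - 1, by linarith, .rfl⟩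
  | cons hadj _ ih =>
    obtain ⟨c', hc', h⟩ := ih
    exact ⟨max (F.f₁ _) c', max_lt hadj.2 hc',
      (Adj.reachable (G := lsub G F _) ⟨hadj.1, le_max_left _ _⟩).trans
        (h.mono (lsub_mono (le_max_right _ _)))⟩

lemma IsDMF.anti (hle : G₁ ≤ G₂) (hF : IsDMF G₂ F) : IsDMF G₁ F :=
  ⟨fun e he => hF.1 e (edgeSet_mono hle he), hF.2.1,
    fun e he e' he' => hF.2.2.1 e (edgeSet_mono hle he) e' (edgeSet_mono hle he'),
    fun v e he => hF.2.2.2 v e (edgeSet_mono hle he)⟩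

lemma IsDMF.injOn_edgeSet (hF : IsDMF G F) : Set.InjOn F.f₁ G.edgeSet :=
  fun e he e' he' => hF.2.2.1 e he e' he'

lemma IsDMF.f₀_le_of_reachable (hF : IsDMF G F) {x y : V} (h : (lsub G F c).Reachable x y)
    (hxy : x ≠ y) : F.f₀ x ≤ c := by
  obtain ⟨p⟩ := h
  cases p with
  | nil => exact absurd rfl hxy
  | cons hadj _ => exact (hF.1 _ hadj.1 x (Sym2.mem_mk_left _ _)).trans hadj.2

def SublevelEquiv (G : SimpleGraph V) (F : PreDMF V) (G' : SimpleGraph V) (F' : PreDMF V) :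
    Prop :=
  ∀ c x y, (lsub G F c).Reachable x y ↔ (lsub G' F' c).Reachable x y

lemma SublevelEquiv.ssub_reachable_iff {G' : SimpleGraph V} (h : SublevelEquiv G F G' F')
    {x y : V} : (ssub G F c).Reachable x y ↔ (ssub G' F' c).Reachable x y := by
  simp only [_root_.ssub_reachable_iff, h _ x y]

lemma SimpleGraph.IsEdgeJoin.reachable_lsub_iff {K K₁ K₂ : SimpleGraph V} {A B : Set V}
    {p q : V} (hK : IsEdgeJoin K K₁ K₂ A B p q) (hc : c < F.f₁ s(p, q)) {x y : V} :
    (lsub K F c).Reachable x y ↔ (lsub K₁ F c).Reachable x y ∨ (lsub K₂ F c).Reachable x y := by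
  rw [hK.eq_sup, lsub_sup, lsub_sup, lsub_edge_of_lt hc, sup_bot_eq]
  exact reachable_sup_iff_of_support_subset hK.disjoint
    ((support_mono lsub_le).trans hK.support_left) ((support_mono lsub_le).trans hK.support_right)

lemma SublevelEquiv.congr_right {G' : SimpleGraph V} {F'' : PreDMF V}
    (h : SublevelEquiv G F G' F') (hf : ∀ e ∈ G'.edgeSet, F'.f₁ e = F''.f₁ e) :
    SublevelEquiv G F G' F'' := fun c x y => by
  rw [h, lsub_congr hf]

lemma SublevelEquiv.join {P P₁ P₂ : SimpleGraph V} {A B : Set V} {u w a b : V}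
    (hG : IsEdgeJoin G G₁ G₂ A B u w) (hP : IsEdgeJoin P P₁ P₂ A B a b)
    (h₁ : SublevelEquiv G₁ F P₁ F') (h₂ : SublevelEquiv G₂ F P₂ F')
    (hab : F'.f₁ s(a, b) = F.f₁ s(u, w)) (hGmax : ∀ e ∈ G.edgeSet, F.f₁ e ≤ F.f₁ s(u, w))
    (hPmax : ∀ e ∈ P.edgeSet, F'.f₁ e ≤ F.f₁ s(u, w))
    (hGconn : ∀ x ∈ A ∪ B, ∀ y ∈ A ∪ B, G.Reachable x y)
    (hPconn : ∀ x ∈ A ∪ B, ∀ y ∈ A ∪ B, P.Reachable x y) :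
    SublevelEquiv G F P F' := by
  intro c x y
  rcases lt_or_ge c (F.f₁ s(u, w)) with hc | hc
  · rw [hG.reachable_lsub_iff hc, hP.reachable_lsub_iff (hc.trans_eq hab.symm), h₁, h₂]
  · rw [lsub_eq_self fun e he => (hGmax e he).trans hc,
      lsub_eq_self fun e he => (hPmax e he).trans hc,
      reachable_iff_of_support_subset hG.support_subset hGconn,
      reachable_iff_of_support_subset hP.support_subset hPconn]

end Sublevel

section CmEquiv

variable {V : Type*} {G G' : SimpleGraph V} {F F' : PreDMF V}

theorem IsDMF.of_sublevelEquiv (hF : IsDMF G F) (h : SublevelEquiv G F G' F')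
    (hf₀ : F'.f₀ = F.f₀) (hinj : Set.InjOn F'.f₁ G'.edgeSet)
    (himg : F'.f₁ '' G'.edgeSet = F.f₁ '' G.edgeSet) : IsDMF G' F' := by
  have hle : ∀ x y, G'.Adj x y → F.f₀ x ≤ F'.f₁ s(x, y) := fun x y hxy =>
    hF.f₀_le_of_reachable ((h _ x y).mpr (Adj.reachable ⟨hxy, le_rfl⟩)) hxy.ne
  refine ⟨fun e he v hv => ?_, hf₀ ▸ hF.2.1, hinj, fun v e' he' hv => ?_⟩
  · obtain ⟨w, rfl⟩ := Sym2.mem_iff_exists.mp hv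
    exact hf₀ ▸ hle v w he
  · -- `v` lies on the edge `vy` of `G` of value `f₀ v`; a walk from `v` to `y` in `G'` at that
    -- level cannot start below `f₀ v`, so it starts with the unique edge `e'` of that value.
    obtain ⟨e, he, hval⟩ := himg ▸ Set.mem_image_of_mem F'.f₁ he'
    obtain ⟨y, rfl⟩ := Sym2.mem_iff_exists.mp (hF.2.2.2 v e he (hf₀ ▸ hv.trans hval.symm))
    obtain ⟨p⟩ := (h _ v y).mp (Adj.reachable (G := lsub G F _) ⟨he, hval.le⟩)
    cases p with
    | nil => exact absurd rfl (G.ne_of_adj he)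
    | cons hadj _ =>
      obtain ⟨hadj, hz⟩ := hadj
      rcases hz.lt_or_eq with hz | hz
      · have := hle _ _ hadj
        rw [hf₀] at hv
        linarith
      · rw [← hinj hadj he' hz]
        exact Sym2.mem_mk_left _ _

lemma SublevelEquiv.reachable_endpoints (hG : G.IsAcyclic) (h : SublevelEquiv G F G' F')
    (hinj : Set.InjOn F'.f₁ G'.edgeSet) {x y x' y' : V} (hxy : G.Adj x y) (hxy' : G'.Adj x' y')
    (hval : F'.f₁ s(x', y') = F.f₁ s(x, y)) :
    ((ssub G' F' (F.f₁ s(x, y))).Reachable x x' ∧ (ssub G' F' (F.f₁ s(x, y))).Reachable y y') ∨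
      ((ssub G' F' (F.f₁ s(x, y))).Reachable x y' ∧
        (ssub G' F' (F.f₁ s(x, y))).Reachable y x') := by
  set c := F.f₁ s(x, y)
  have hle : lsub G' F' c ≤ ssub G' F' c ⊔ edge x' y' := by
    intro a b ⟨hab, habc⟩
    rcases habc.lt_or_eq with hlt | heq
    · exact Or.inl ⟨hab, hlt⟩
    · exact Or.inr ((adj_edge _ _).mpr ⟨hinj hxy' hab (hval.trans heq.symm), hab.ne⟩)
  have hnot : ¬ (ssub G' F' c).Reachable x y := by
    rw [← h.ssub_reachable_iff]
    refine fun hr => isBridge_iff.mp (isAcyclic_iff_forall_adj_isBridge.mp hG hxy)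
      (hr.mono fun a b (hab : (ssub G F c).Adj a b) => deleteEdges_adj.mpr ⟨hab.1, fun he => ?_⟩)
    have hlt : F.f₁ s(a, b) < c := hab.2
    rw [Set.mem_singleton_iff.mp he] at hlt
    exact hlt.false
  rcases ((h c x y).mp (Adj.reachable ⟨hxy, le_rfl⟩)).of_le_sup_edge hle with
    hr | ⟨hx, hy⟩ | ⟨hx, hy⟩
  · exact absurd hr hnot
  · exact Or.inl ⟨hx, hy.symm⟩
  · exact Or.inr ⟨hx, hy.symm⟩

theorem exists_cmEquiv_id (hG : G.IsAcyclic) (hF : IsDMF G F) (h : SublevelEquiv G F G' F')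
    (hf₀ : F'.f₀ = F.f₀) (hinj : Set.InjOn F'.f₁ G'.edgeSet)
    (himg : F'.f₁ '' G'.edgeSet = F.f₁ '' G.edgeSet) :
    ∃ φe, CmEquiv G F G' F' id φe := by
  classical
  have hex : ∀ e ∈ G.edgeSet, ∃ e' ∈ G'.edgeSet, F'.f₁ e' = F.f₁ e := fun e he => by
    rw [← Set.mem_image, himg]
    exact Set.mem_image_of_mem _ he
  set φe : Sym2 V → Sym2 V := fun e => if h : e ∈ G.edgeSet then (hex e h).choose else e
  have hmem : ∀ e ∈ G.edgeSet, φe e ∈ G'.edgeSet := fun e he => by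
    simpa only [φe, dif_pos he] using (hex e he).choose_spec.1
  have hφ : ∀ e ∈ G.edgeSet, F'.f₁ (φe e) = F.f₁ e := fun e he => by
    simpa only [φe, dif_pos he] using (hex e he).choose_spec.2
  have hends : ∀ e ∈ G.edgeSet,
      (∀ u ∈ e, ∃ u' ∈ φe e, (ssub G' F' (F.f₁ e)).Reachable u u') ∧
      (∀ u' ∈ φe e, ∃ u ∈ e, (ssub G' F' (F.f₁ e)).Reachable u' u) := by
    intro e he
    have hmem' := hmem e he
    have hφ' := hφ e he
    generalize φe e = e' at hmem' hφ'
    induction e using Sym2.ind with | _ x y =>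
    induction e' using Sym2.ind with | _ x' y' =>
    simp only [Sym2.mem_iff, forall_eq_or_imp, forall_eq, exists_eq_or_imp, exists_eq_left]
    rcases h.reachable_endpoints hG hinj he hmem' hφ' with ⟨hx, hy⟩ | ⟨hx, hy⟩
    · exact ⟨⟨Or.inl hx, Or.inr hy⟩, Or.inl hx.symm, Or.inr hy.symm⟩
    · exact ⟨⟨Or.inr hx, Or.inl hy⟩, Or.inr hy.symm, Or.inl hx.symm⟩
  refine ⟨φe, Function.bijective_id, hmem, fun e₁ he₁ e₂ he₂ heq => ?_, fun e' he' => ?_,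
    fun v => congrFun hf₀ v, hφ, h, fun e he => (hends e he).1, fun e he => (hends e he).2⟩
  · exact hF.injOn_edgeSet he₁ he₂ ((hφ e₁ he₁).symm.trans (heq ▸ hφ e₂ he₂))
  · obtain ⟨e, he, hval⟩ := himg ▸ Set.mem_image_of_mem F'.f₁ he'
    exact ⟨e, he, hinj (hmem e he) he' ((hφ e he).trans hval)⟩

end CmEquiv

section PathModel

variable {V : Type*}

structure IsPathModel (G : SimpleGraph V) (F : PreDMF V) (S : Set V) (L : List V)
    (f : Sym2 V → ℝ) : Prop where
  nodup : L.Nodup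
  mem_iff : ∀ v, v ∈ L ↔ v ∈ S
  injOn : Set.InjOn f (pathGraphOn L).edgeSet
  image_eq : f '' (pathGraphOn L).edgeSet = F.f₁ '' G.edgeSet
  sublevelEquiv : SublevelEquiv G F (pathGraphOn L) ⟨F.f₀, f⟩

lemma exists_isPathModel_bot (F : PreDMF V) {S : Set V} (hS : S.Subsingleton) :
    ∃ L f, IsPathModel ⊥ F S L f := by
  have key : ∀ L : List V, pathGraphOn L = ⊥ → L.Nodup → (∀ v, v ∈ L ↔ v ∈ S) →
      IsPathModel ⊥ F S L F.f₁ := fun L hP hL hmem =>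
    ⟨hL, hmem, by simp [hP], by rw [hP], fun c x y => by rw [hP]⟩
  rcases hS.eq_empty_or_singleton with rfl | ⟨x, rfl⟩
  · exact ⟨[], F.f₁, key [] rfl List.nodup_nil (by simp)⟩
  · exact ⟨[x], F.f₁, key [x] rfl (List.nodup_singleton x) (by simp)⟩

theorem IsPathModel.join {G G₁ G₂ : SimpleGraph V} {F : PreDMF V} {A B : Set V} {u w : V}
    {L₁ L₂ : List V} {f₁ f₂ : Sym2 V → ℝ} (hF : IsDMF G F) (hG : IsEdgeJoin G G₁ G₂ A B u w)
    (hmax : ∀ e ∈ G.edgeSet, F.f₁ e ≤ F.f₁ s(u, w))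
    (hconn : ∀ x ∈ A ∪ B, ∀ y ∈ A ∪ B, G.Reachable x y)
    (h₁ : IsPathModel G₁ F A L₁ f₁) (h₂ : IsPathModel G₂ F B L₂ f₂) :
    ∃ f, IsPathModel G F (A ∪ B) (L₁ ++ L₂) f := by
  classical
  have hL₁ : L₁ ≠ [] := by rintro rfl; simpa using (h₁.mem_iff u).mpr hG.left_mem
  have hL₂ : L₂ ≠ [] := by rintro rfl; simpa using (h₂.mem_iff w).mpr hG.right_mem
  set P₁ := pathGraphOn L₁
  set P₂ := pathGraphOn L₂
  have hP : IsEdgeJoin (pathGraphOn (L₁ ++ L₂)) P₁ P₂ A B (L₁.getLast hL₁) (L₂.head hL₂) :=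
    ⟨pathGraphOn_append hL₁ hL₂, hG.disjoint,
      fun v hv => (h₁.mem_iff v).mp (mem_of_mem_support_pathGraphOn hv),
      fun v hv => (h₂.mem_iff v).mp (mem_of_mem_support_pathGraphOn hv),
      (h₁.mem_iff _).mp (List.getLast_mem hL₁), (h₂.mem_iff _).mp (List.head_mem hL₂)⟩
  set m := F.f₁ s(u, w)
  set f : Sym2 V → ℝ := fun e =>
    if e ∈ P₁.edgeSet then f₁ e else if e ∈ P₂.edgeSet then f₂ e else m
  have hf₁ : ∀ e ∈ P₁.edgeSet, f e = f₁ e := fun e he => if_pos he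
  have hf₂ : ∀ e ∈ P₂.edgeSet, f e = f₂ e := fun e he =>
    (if_neg (hP.disjoint_edgeSet.notMem_of_mem_right he)).trans (if_pos he)
  have hfm : f s(L₁.getLast hL₁, L₂.head hL₂) = m :=
    (if_neg fun h => hP.edge_notMem (Or.inl h)).trans (if_neg fun h => hP.edge_notMem (Or.inr h))
  have himg₁ : f '' P₁.edgeSet = F.f₁ '' G₁.edgeSet := (Set.image_congr hf₁).trans h₁.image_eq
  have himg₂ : f '' P₂.edgeSet = F.f₁ '' G₂.edgeSet := (Set.image_congr hf₂).trans h₂.image_eq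
  have himg : f '' (pathGraphOn (L₁ ++ L₂)).edgeSet = F.f₁ '' G.edgeSet := by
    rw [hP.image_edgeSet, hG.image_edgeSet, hfm, himg₁, himg₂]
  obtain ⟨-, -, hdisj, hmax_notMem⟩ := hG.injOn_edgeSet_iff.mp hF.injOn_edgeSet
  have hinj : Set.InjOn f (pathGraphOn (L₁ ++ L₂)).edgeSet := by
    rw [hP.injOn_edgeSet_iff, himg₁, himg₂, hfm]
    exact ⟨h₁.injOn.congr fun e he => (hf₁ e he).symm,
      h₂.injOn.congr fun e he => (hf₂ e he).symm, hdisj, hmax_notMem⟩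
  have hmem : ∀ v, v ∈ L₁ ++ L₂ ↔ v ∈ A ∪ B := fun v => by
    rw [List.mem_append, h₁.mem_iff, h₂.mem_iff, Set.mem_union]
  have hPmax : ∀ e ∈ (pathGraphOn (L₁ ++ L₂)).edgeSet, f e ≤ m := fun e he => by
    obtain ⟨g, hg, hv⟩ := himg ▸ Set.mem_image_of_mem f he
    exact hv.symm.trans_le (hmax g hg)
  refine ⟨f, List.nodup_append.mpr ⟨h₁.nodup, h₂.nodup, fun x hx y hy => ?_⟩, hmem, hinj, himg,
    SublevelEquiv.join hG hP (h₁.sublevelEquiv.congr_right fun e he => (hf₁ e he).symm)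
      (h₂.sublevelEquiv.congr_right fun e he => (hf₂ e he).symm) hfm hmax hPmax hconn
      fun x hx y hy => reachable_pathGraphOn ((hmem x).mpr hx) ((hmem y).mpr hy)⟩
  exact hG.disjoint.ne_of_mem ((h₁.mem_iff x).mp hx) ((h₂.mem_iff y).mp hy)

theorem exists_isPathModel [Finite V] {G : SimpleGraph V} (hG : G.IsAcyclic)
    {F : PreDMF V} (hF : IsDMF G F) {S : Set V} (hsupp : G.support ⊆ S)
    (hS : ∀ x ∈ S, ∀ y ∈ S, G.Reachable x y) : ∃ L f, IsPathModel G F S L f := by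
  induction G using WellFoundedLT.induction generalizing S with
  | _ G ih =>
  rcases eq_or_ne G ⊥ with rfl | hne
  · exact exists_isPathModel_bot F fun x hx y hy => reachable_bot.mp (hS x hx y hy)
  obtain ⟨e, he, hmax⟩ :=
    Set.exists_max_image G.edgeSet F.f₁ (Set.toFinite _) (edgeSet_nonempty.mpr hne)
  induction e using Sym2.ind with | _ u w =>
  set H := G.deleteEdges {s(u, w)}
  have hHG : H < G := lt_of_le_of_ne (deleteEdges_le _) fun h =>
    (deleteEdges_adj.mp (h ▸ he : H.Adj u w)).2 rfl
  obtain ⟨hjoin, rfl⟩ := isEdgeJoin_of_not_reachable (deleteEdges_sup_edge he).symm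
    (isBridge_iff.mp (isAcyclic_iff_forall_adj_isBridge.mp hG he)) hsupp hS
  have hsub : ∀ v, (H.connectedComponentMk v).toSimpleGraph.spanningCoe < G := fun v =>
    (ConnectedComponent.spanningCoe_toSimpleGraph_le _).trans_lt hHG
  have hpart : ∀ v, ∃ L f, IsPathModel (H.connectedComponentMk v).toSimpleGraph.spanningCoe F
      (H.connectedComponentMk v).supp L f := fun v =>
    ih _ (hsub v) (hG.anti (hsub v).le) (hF.anti (hsub v).le)
      (ConnectedComponent.support_spanningCoe_toSimpleGraph_subset _)
      fun x hx y hy => ConnectedComponent.reachable_spanningCoe_toSimpleGraph _ hx hy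
  obtain ⟨L₁, f₁, h₁⟩ := hpart u
  obtain ⟨L₂, f₂, h₂⟩ := hpart w
  exact ⟨L₁ ++ L₂, h₁.join hF hjoin hmax hS h₂⟩

end PathModel

/-- Every discrete Morse function on a tree is cm-equivalent to a discrete Morse
function on a path (a tree all of whose vertices have degree at most two; note that a
path on the same vertex set has the same number of simplices). -/
theorem stmt16 {V : Type*} [Fintype V] (G : SimpleGraph V) (hG : G.IsTree)
    (F : PreDMF V) (hF : IsDMF G F) :
    ∃ (G' : SimpleGraph V) (F' : PreDMF V) (φv : V → V) (φe : Sym2 V → Sym2 V),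
      G'.IsTree ∧ (∀ v : V, {w : V | G'.Adj v w}.ncard ≤ 2) ∧
      IsDMF G' F' ∧ CmEquiv G F G' F' φv φe := by
  obtain ⟨L, f, hL⟩ := exists_isPathModel hG.isAcyclic hF (Set.subset_univ _)
    fun x _ y _ => hG.connected.preconnected x y
  have hcov : ∀ v, v ∈ L := fun v => (hL.mem_iff v).mpr trivial
  have hne : L ≠ [] := by
    obtain ⟨v⟩ := hG.connected.nonempty
    rintro rfl
    exact List.not_mem_nil (hcov v)
  obtain ⟨φe, hφ⟩ := exists_cmEquiv_id hG.isAcyclic hF hL.sublevelEquiv rfl hL.injOn hL.image_eq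
  exact ⟨pathGraphOn L, ⟨F.f₀, f⟩, id, φe, isTree_pathGraphOn hL.nodup hne hcov,
    ncard_neighborSet_pathGraphOn_le hL.nodup,
    hF.of_sublevelEquiv hL.sublevelEquiv rfl hL.injOn hL.image_eq, hφ⟩
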